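/- arXiv:2506.20508 — 3 statements merged into one kernel-verified Lean document; each statement's English description precedes it below -/
import Mathlib

section
/- Let P be a simple polygon in ℝ² in general position, and let q, t ∈ P be points with segment ℝ q t ⊆ P, openSegment ℝ q t ⊄ interior P, and openSegment ℝ q t ∩ interior P ≠ ∅. Then some reflex vertex of P lies on openSegment ℝ q t. -/
/-!
Parametrise `[q, t]` by `lineMap q t` on `[0, 1]`. As `(0, 1)` is connected and the open
segment meets the open set `interior P` without lying in it, some point `x` of the open segment
is not interior but is a limit of interior points of the segment. If `x` is a vertex, local
convexity there would make `x`, the midpoint of an interior point and a point of `P`, interior.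
Otherwise `x` lies on exactly one edge, so near `x` the boundary lies on a line. Each open
half-disc beside that line avoids the boundary, hence lies in `P` as soon as it meets `P`; the
interior points of the segment near `x` show that both half-discs meet `P`, and as `P` is closed
the whole disc lies in `P`, so `x` is interior after all.
-/

open scoped RealInnerProductSpace symmDiff
open Metric Set MeasureTheory

noncomputable section

abbrev Pt : Type := EuclideanSpace ℝ (Fin 2)

/-- The cyclic successor on `Fin n`. -/
def nxt {n : ℕ} (i : Fin n) : Fin n := ⟨(i.1 + 1) % n, Nat.mod_lt _ i.pos⟩

/-- The cyclic predecessor on `Fin n`. -/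
def prv {n : ℕ} (i : Fin n) : Fin n := ⟨(i.1 + n - 1) % n, Nat.mod_lt _ i.pos⟩

/-- A simple polygon in the plane: at least 3 vertices, injective vertex map,
adjacent edges meet exactly in their common vertex, non-adjacent edges are disjoint. -/
structure SimplePolygon where
  n : ℕ
  hn : 3 ≤ n
  v : Fin n → Pt
  inj : Function.Injective v
  adj : ∀ i : Fin n,
    segment ℝ (v i) (v (nxt i)) ∩ segment ℝ (v (nxt i)) (v (nxt (nxt i))) = {v (nxt i)}
  nonadj : ∀ i j : Fin n, i ≠ j → j ≠ nxt i → i ≠ nxt j →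
    segment ℝ (v i) (v (nxt i)) ∩ segment ℝ (v j) (v (nxt j)) = ∅

namespace SimplePolygon

variable (Q : SimplePolygon)

/-- The `i`-th edge of the polygon. -/
def edge (i : Fin Q.n) : Set Pt := segment ℝ (Q.v i) (Q.v (nxt i))

/-- The boundary of the polygon: the union of its edges. -/
def bdry : Set Pt := ⋃ i, Q.edge i

/-- The polygon body: the boundary together with all points off the boundary whose
connected component in the complement of the boundary is bounded. -/
def body : Set Pt :=
  Q.bdry ∪ {z | z ∉ Q.bdry ∧ Bornology.IsBounded (connectedComponentIn Q.bdryᶜ z)}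

/-- A point `s` sees a point `t` if the open segment between them lies in the
interior of the polygon body. -/
def Sees (s t : Pt) : Prop := openSegment ℝ s t ⊆ interior Q.body

/-- The polygon is locally convex at vertex `v i`. -/
def LocallyConvexAt (i : Fin Q.n) : Prop :=
  ∃ ε > 0, Convex ℝ (Q.body ∩ Metric.ball (Q.v i) ε)

/-- A reflex vertex: the polygon is not locally convex there. -/
def IsReflex (i : Fin Q.n) : Prop := ¬ Q.LocallyConvexAt i

/-- Values `⟪n, s - r⟫ > 0` for distinct reflex vertices `r, s` and unit normal `n` such
that a small piece of the line with normal `n` through each of `r, s` is contained in the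
polygon body (short-width candidates). -/
def SWset : Set ℝ :=
  {d | ∃ i j : Fin Q.n, Q.IsReflex i ∧ Q.IsReflex j ∧ Q.v i ≠ Q.v j ∧
    ∃ nv : Pt, ‖nv‖ = 1 ∧ d = ⟪nv, Q.v j - Q.v i⟫ ∧ 0 < d ∧
      ∀ w ∈ ({Q.v i, Q.v j} : Set Pt), ∃ ε > 0,
        {z : Pt | ⟪nv, z - w⟫ = 0} ∩ Metric.ball w ε ⊆ Q.body}

/-- The short width of the polygon. -/
def SW : ℝ := sInf Q.SWset

/-- Values `⟪n, a - b⟫` for convex vertices `a, b` and unit vector `n` such that the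
whole polygon body lies between the lines through `b` and `a` with normal `n`
(long-width candidates). -/
def LWset : Set ℝ :=
  {d | ∃ i j : Fin Q.n, Q.LocallyConvexAt i ∧ Q.LocallyConvexAt j ∧
    ∃ nv : Pt, ‖nv‖ = 1 ∧ d = ⟪nv, Q.v i - Q.v j⟫ ∧
      ∀ z ∈ Q.body, ⟪nv, Q.v j⟫ ≤ ⟪nv, z⟫ ∧ ⟪nv, z⟫ ≤ ⟪nv, Q.v i⟫}

/-- The long width of the polygon. -/
def LW : ℝ := sSup Q.LWset

/-- General position: no three distinct vertices are collinear. -/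
def GeneralPosition : Prop :=
  ∀ i j k : Fin Q.n, Q.v i ≠ Q.v j → Q.v j ≠ Q.v k → Q.v i ≠ Q.v k →
    ¬ Collinear ℝ ({Q.v i, Q.v j, Q.v k} : Set Pt)

/-- The visibility polygon of a point `p`. -/
def VP (p : Pt) : Set Pt := {z ∈ Q.body | openSegment ℝ p z ⊆ interior Q.body}

/-- Vision stability with constant `γ`. -/
def VisionStable (γ : ℝ) : Prop :=
  ∀ p ∈ Q.body, ∀ q ∈ Q.body,
    volume (Q.VP p ∆ Q.VP q) ≤ ENNReal.ofReal (γ * dist p q)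

/-- The perimeter of the polygon. -/
def perim : ℝ := ∑ i, dist (Q.v i) (Q.v (nxt i))

end SimplePolygon
open Filter Topology AffineMap

lemma lineMap_add_eq_add_smul {k V : Type*} [Ring k] [AddCommGroup V] [Module k V]
    (q t : V) (s r : k) : lineMap q t (s + r) = lineMap q t s + r • (t - q) := by
  simp only [lineMap_apply_module', add_smul]
  abel

section LocalGeometry

variable {E : Type*} [NormedAddCommGroup E] [NormedSpace ℝ E]

lemma tendsto_add_smul_nhds_zero (z v : E) :
    Tendsto (fun τ : ℝ => z + τ • v) (𝓝 0) (𝓝 z) :=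
  (continuous_const.add (continuous_id.smul continuous_const)).tendsto' 0 z (by simp)

lemma exists_lineMap_notMem_frequently_mem {U : Set E} (hU : IsOpen U) {q t : E}
    (hnot : ¬ openSegment ℝ q t ⊆ U) (hmeet : (openSegment ℝ q t ∩ U).Nonempty) :
    ∃ s ∈ Ioo (0 : ℝ) 1, lineMap q t s ∉ U ∧
      ∃ᶠ r in 𝓝 (0 : ℝ), lineMap q t s + r • (t - q) ∈ U := by
  rw [openSegment_eq_image_lineMap] at hnot hmeet
  have hV : IsOpen (lineMap q t ⁻¹' U : Set ℝ) := hU.preimage lineMap_continuous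
  have hclosure : ¬ closure (lineMap q t ⁻¹' U) ∩ Ioo (0 : ℝ) 1 ⊆ lineMap q t ⁻¹' U :=
    fun h => hnot (image_subset_iff.2
      (isPreconnected_Ioo.subset_of_closure_inter_subset hV (image_inter_nonempty_iff.1 hmeet) h))
  obtain ⟨s, ⟨hcl, hs⟩, hsU⟩ := not_subset.1 hclosure
  refine ⟨s, hs, hsU, ?_⟩
  rw [mem_closure_iff_frequently, ← map_add_left_nhds_zero, frequently_map] at hcl
  simpa only [mem_preimage, lineMap_add_eq_add_smul] using hcl

lemma eventually_lineMap_add_smul_mem {P : Set E} {q t : E} (hseg : segment ℝ q t ⊆ P)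
    {s : ℝ} (hs : s ∈ Ioo (0 : ℝ) 1) :
    ∀ᶠ r in 𝓝 (0 : ℝ), lineMap q t s + r • (t - q) ∈ P := by
  have hnear : ∀ᶠ r in 𝓝 (0 : ℝ), s + r ∈ Ioo (0 : ℝ) 1 := by
    have hmem := isOpen_Ioo.mem_nhds hs
    rwa [← map_add_left_nhds_zero] at hmem
  filter_upwards [hnear] with r hr
  rw [← lineMap_add_eq_add_smul]
  exact hseg (segment_eq_image_lineMap ℝ q t ▸ mem_image_of_mem _ (Ioo_subset_Icc_self hr))

variable {P : Set E} {x d : E}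

lemma exists_add_smul_mem_interior_and_sub_smul_mem
    (hline : ∀ᶠ r in 𝓝 (0 : ℝ), x + r • d ∈ P) (hint : ∃ᶠ r in 𝓝 (0 : ℝ), x + r • d ∈ interior P)
    {ε : ℝ} (hε : 0 < ε) :
    ∃ r : ℝ, x + r • d ∈ interior P ∩ ball x ε ∧ x - r • d ∈ P ∩ ball x ε := by
  have hnear : ∀ᶠ r in 𝓝 (0 : ℝ), x + r • d ∈ ball x ε :=
    (tendsto_add_smul_nhds_zero x d).eventually (ball_mem_nhds x hε)
  have hneg : ∀ᶠ r in 𝓝 (0 : ℝ), x + (-r) • d ∈ P ∩ ball x ε :=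
    (continuous_neg.tendsto' (0 : ℝ) 0 neg_zero).eventually (hline.and hnear)
  obtain ⟨r, hy, hz⟩ := ((hint.and_eventually hnear).and_eventually hneg).exists
  exact ⟨r, hy, by simpa [neg_smul, ← sub_eq_add_neg] using hz⟩

lemma not_convex_inter_ball (hx : x ∉ interior P)
    (hline : ∀ᶠ r in 𝓝 (0 : ℝ), x + r • d ∈ P) (hint : ∃ᶠ r in 𝓝 (0 : ℝ), x + r • d ∈ interior P)
    {ε : ℝ} (hε : 0 < ε) : ¬ Convex ℝ (P ∩ ball x ε) := by
  intro hconv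
  obtain ⟨r, hy, hz⟩ := exists_add_smul_mem_interior_and_sub_smul_mem hline hint hε
  have hyC : x + r • d ∈ interior (P ∩ ball x ε) := by
    rwa [interior_inter, isOpen_ball.interior_eq]
  have hmid : x ∈ openSegment ℝ (x + r • d) (x - r • d) :=
    ⟨1 / 2, 1 / 2, by norm_num, by norm_num, by norm_num, by module⟩
  exact hx (interior_mono inter_subset_left
    (hconv.openSegment_interior_self_subset_interior hyC hz hmid))

end LocalGeometry

section HalfPlanes

variable {E : Type*} [NormedAddCommGroup E] [InnerProductSpace ℝ E]

lemma exists_ne_zero_inner_eq_zero [FiniteDimensional ℝ E] (hE : 2 ≤ Module.finrank ℝ E)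
    (d : E) : ∃ nv : E, nv ≠ 0 ∧ ⟪nv, d⟫ = 0 := by
  have hspan : Module.finrank ℝ (ℝ ∙ d) ≤ 1 := by
    simpa using finrank_span_le_card (R := ℝ) ({d} : Set E)
  have hperp : (ℝ ∙ d)ᗮ ≠ ⊥ := by
    intro h
    have := (ℝ ∙ d).finrank_add_finrank_orthogonal
    rw [h, finrank_bot] at this
    omega
  obtain ⟨nv, hmem, hne⟩ := Submodule.exists_mem_ne_zero_of_ne_bot hperp
  exact ⟨nv, hne, by rwa [real_inner_comm, ← Submodule.mem_orthogonal_singleton_iff_inner_right]⟩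

lemma inner_sub_eq_zero_of_mem_segment {nv a b z w : E} (hnv : ⟪nv, b - a⟫ = 0)
    (hz : z ∈ segment ℝ a b) (hw : w ∈ segment ℝ a b) : ⟪nv, z - w⟫ = 0 := by
  rw [segment_eq_image'] at hz hw
  obtain ⟨s, -, rfl⟩ := hz
  obtain ⟨s', -, rfl⟩ := hw
  rw [show a + s • (b - a) - (a + s' • (b - a)) = (s - s') • (b - a) by module,
    real_inner_smul_right, hnv, mul_zero]

lemma eventually_add_smul_mem_and_inner_sub_pos {U : Set E} {x z nv : E} (hU : U ∈ 𝓝 z)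
    (hz : 0 ≤ ⟪nv, z - x⟫) (hnv : nv ≠ 0) :
    ∀ᶠ τ in 𝓝[>] (0 : ℝ), z + τ • nv ∈ U ∧ 0 < ⟪nv, z + τ • nv - x⟫ := by
  filter_upwards [((tendsto_add_smul_nhds_zero z nv).mono_left nhdsWithin_le_nhds).eventually hU,
    self_mem_nhdsWithin] with τ hτU hτ
  refine ⟨hτU, ?_⟩
  rw [show z + τ • nv - x = (z - x) + τ • nv by abel, inner_add_right, real_inner_smul_right,
    real_inner_self_eq_norm_sq]
  have : 0 < ‖nv‖ := norm_pos_iff.2 hnv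
  have : (0 : ℝ) < τ := hτ
  positivity

lemma mem_closure_ball_inter_inner_sub_pos {x z nv : E} {ε : ℝ} (hz : z ∈ ball x ε)
    (hzx : 0 ≤ ⟪nv, z - x⟫) (hnv : nv ≠ 0) :
    z ∈ closure (ball x ε ∩ {w | 0 < ⟪nv, w - x⟫}) :=
  mem_closure_of_tendsto
    ((tendsto_add_smul_nhds_zero z nv).mono_left nhdsWithin_le_nhds)
    (eventually_add_smul_mem_and_inner_sub_pos (isOpen_ball.mem_nhds hz) hzx hnv)

lemma exists_mem_ball_inner_sub_pos {P : Set E} {x d nv : E}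
    (hline : ∀ᶠ r in 𝓝 (0 : ℝ), x + r • d ∈ P) (hint : ∃ᶠ r in 𝓝 (0 : ℝ), x + r • d ∈ interior P)
    (hnv : nv ≠ 0) {ε : ℝ} (hε : 0 < ε) :
    ∃ w ∈ P ∩ ball x ε, 0 < ⟪nv, w - x⟫ := by
  obtain ⟨r, hy, hz⟩ := exists_add_smul_mem_interior_and_sub_smul_mem hline hint hε
  rcases lt_or_ge ⟪nv, r • d⟫ 0 with hneg | hnonneg
  · exact ⟨x - r • d, hz, by rwa [sub_sub_cancel_left, inner_neg_right, neg_pos]⟩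
  · -- `x + r • d` is interior, so it can be pushed off the line into the open half-plane
    obtain ⟨τ, ⟨hτP, hτB⟩, hτ⟩ := (eventually_add_smul_mem_and_inner_sub_pos
      ((isOpen_interior.inter isOpen_ball).mem_nhds hy) (by rwa [add_sub_cancel_left]) hnv).exists
    exact ⟨_, ⟨interior_subset hτP, hτB⟩, hτ⟩

end HalfPlanes

namespace SimplePolygon

variable (Q : SimplePolygon)

lemma isClosed_edge (i : Fin Q.n) : IsClosed (Q.edge i) :=
  (segment_eq_image_lineMap ℝ (Q.v i) (Q.v (nxt i)) ▸
    isCompact_Icc.image lineMap_continuous).isClosed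

lemma isClosed_bdry : IsClosed Q.bdry :=
  isClosed_iUnion_of_finite Q.isClosed_edge

lemma mem_body_iff_of_notMem_bdry {z : Pt} (hz : z ∉ Q.bdry) :
    z ∈ Q.body ↔ Bornology.IsBounded (connectedComponentIn Q.bdryᶜ z) := by
  simp [body, hz]

lemma mem_body_iff_of_mem_connectedComponentIn {y z : Pt}
    (hy : y ∈ connectedComponentIn Q.bdryᶜ z) : y ∈ Q.body ↔ z ∈ Q.body := by
  rw [Q.mem_body_iff_of_notMem_bdry (connectedComponentIn_subset _ _ hy),
    Q.mem_body_iff_of_notMem_bdry (connectedComponentIn_nonempty_iff.1 ⟨y, hy⟩),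
    connectedComponentIn_eq hy]

lemma connectedComponentIn_mem_nhds {z : Pt} (hz : z ∉ Q.bdry) :
    connectedComponentIn Q.bdryᶜ z ∈ 𝓝 z :=
  Q.isClosed_bdry.isOpen_compl.connectedComponentIn.mem_nhds (mem_connectedComponentIn hz)

lemma isClosed_body : IsClosed Q.body := by
  refine isOpen_compl_iff.1 (isOpen_iff_mem_nhds.2 fun z hz => ?_)
  filter_upwards [Q.connectedComponentIn_mem_nhds fun h => hz (Or.inl h)] with y hy
  exact (Q.mem_body_iff_of_mem_connectedComponentIn hy).not.2 hz

lemma mem_interior_body_of_notMem_bdry {z : Pt} (hz : z ∈ Q.body) (hzb : z ∉ Q.bdry) :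
    z ∈ interior Q.body :=
  mem_interior_iff_mem_nhds.2 (mem_of_superset (Q.connectedComponentIn_mem_nhds hzb)
    fun _ hy => (Q.mem_body_iff_of_mem_connectedComponentIn hy).2 hz)

lemma subset_body_of_isPreconnected {H : Set Pt} (hH : IsPreconnected H) (hHb : H ⊆ Q.bdryᶜ)
    {w : Pt} (hw : w ∈ H) (hwP : w ∈ Q.body) : H ⊆ Q.body := fun _ hy =>
  (Q.mem_body_iff_of_mem_connectedComponentIn (hH.subset_connectedComponentIn hw hHb hy)).2 hwP

lemma exists_vertex_eq_of_mem_edge_of_mem_edge {i j : Fin Q.n} (hij : i ≠ j) {x : Pt}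
    (hi : x ∈ Q.edge i) (hj : x ∈ Q.edge j) : ∃ k, Q.v k = x := by
  by_cases hji : j = nxt i
  · subst hji
    exact ⟨nxt i, ((Q.adj i).subset ⟨hi, hj⟩ : x = _).symm⟩
  by_cases hij' : i = nxt j
  · subst hij'
    exact ⟨nxt j, ((Q.adj j).subset ⟨hj, hi⟩ : x = _).symm⟩
  · exact absurd (Q.nonadj i j hij hji hij' ▸ ⟨hi, hj⟩ : x ∈ (∅ : Set Pt)) (notMem_empty x)

lemma exists_ball_inter_bdry_subset_edge {i : Fin Q.n} {x : Pt} (hx : x ∈ Q.edge i)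
    (hvert : ∀ k, Q.v k ≠ x) : ∃ ε > 0, Q.bdry ∩ ball x ε ⊆ Q.edge i := by
  have hclosed : IsClosed (⋃ j ∈ ({i}ᶜ : Set (Fin Q.n)), Q.edge j) :=
    (toFinite _).isClosed_biUnion fun j _ => Q.isClosed_edge j
  have hxK : x ∉ ⋃ j ∈ ({i}ᶜ : Set (Fin Q.n)), Q.edge j := by
    simp only [mem_iUnion₂]
    rintro ⟨j, hji, hxj⟩
    obtain ⟨k, hk⟩ := Q.exists_vertex_eq_of_mem_edge_of_mem_edge (Ne.symm hji) hx hxj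
    exact hvert k hk
  obtain ⟨ε, hε, hball⟩ := isOpen_iff.1 hclosed.isOpen_compl x hxK
  refine ⟨ε, hε, fun z ⟨hzb, hzε⟩ => ?_⟩
  obtain ⟨j, hzj⟩ := mem_iUnion.1 hzb
  by_contra hzi
  exact hball hzε (mem_iUnion₂.2 ⟨j, fun hji => hzi (hji ▸ hzj), hzj⟩)

variable {x nv : Pt} {ε : ℝ}

lemma ball_inter_inner_sub_pos_subset_body
    (hL : Q.bdry ∩ ball x ε ⊆ {z | ⟪nv, z - x⟫ = 0})
    (hw : ∃ w ∈ Q.body ∩ ball x ε, 0 < ⟪nv, w - x⟫) :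
    ball x ε ∩ {z | 0 < ⟪nv, z - x⟫} ⊆ Q.body := by
  obtain ⟨w, ⟨hwP, hwε⟩, hwpos⟩ := hw
  refine Q.subset_body_of_isPreconnected ?_ ?_ ⟨hwε, hwpos⟩ hwP
  · have hhalf : {z | 0 < ⟪nv, z - x⟫} = {z | ⟪nv, x⟫ < innerₛₗ ℝ nv z} := by
      ext z
      simp [inner_sub_right]
    rw [hhalf]
    exact ((convex_ball x ε).inter (convex_halfSpace_gt (innerₛₗ ℝ nv).isLinear _)).isPreconnected
  · exact fun z hz hzb => (hL ⟨hzb, hz.1⟩ : ⟪nv, z - x⟫ = 0).not_gt hz.2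

lemma ball_subset_body (hnv : nv ≠ 0) (hL : Q.bdry ∩ ball x ε ⊆ {z | ⟪nv, z - x⟫ = 0})
    (hplus : ∃ w ∈ Q.body ∩ ball x ε, 0 < ⟪nv, w - x⟫)
    (hminus : ∃ w ∈ Q.body ∩ ball x ε, 0 < ⟪-nv, w - x⟫) :
    ball x ε ⊆ Q.body := by
  have hL' : Q.bdry ∩ ball x ε ⊆ {z | ⟪-nv, z - x⟫ = 0} := fun z hz => by
    simp [inner_neg_left, (hL hz : ⟪nv, z - x⟫ = 0)]
  intro z hz
  rcases le_or_gt 0 ⟪nv, z - x⟫ with hpos | hneg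
  · exact Q.isClosed_body.closure_subset_iff.2 (Q.ball_inter_inner_sub_pos_subset_body hL hplus)
      (mem_closure_ball_inter_inner_sub_pos hz hpos hnv)
  · exact Q.ball_inter_inner_sub_pos_subset_body hL' hminus
      ⟨hz, show 0 < ⟪-nv, z - x⟫ by rwa [inner_neg_left, neg_pos]⟩

lemma mem_interior_body_of_forall_vertex_ne {d : Pt} (hxP : x ∈ Q.body) (hvert : ∀ k, Q.v k ≠ x)
    (hline : ∀ᶠ r in 𝓝 (0 : ℝ), x + r • d ∈ Q.body)
    (hint : ∃ᶠ r in 𝓝 (0 : ℝ), x + r • d ∈ interior Q.body) :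
    x ∈ interior Q.body := by
  by_cases hxb : x ∈ Q.bdry
  swap
  · exact Q.mem_interior_body_of_notMem_bdry hxP hxb
  obtain ⟨i, hi⟩ := mem_iUnion.1 hxb
  obtain ⟨ε, hε, hball⟩ := Q.exists_ball_inter_bdry_subset_edge hi hvert
  obtain ⟨nv, hnv, hperp⟩ := exists_ne_zero_inner_eq_zero (by simp) (Q.v (nxt i) - Q.v i)
  have hL : Q.bdry ∩ ball x ε ⊆ {z | ⟪nv, z - x⟫ = 0} := fun z hz =>
    inner_sub_eq_zero_of_mem_segment hperp (hball hz) hi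
  exact mem_interior_iff_mem_nhds.2 (mem_of_superset (ball_mem_nhds x hε)
    (Q.ball_subset_body hnv hL (exists_mem_ball_inner_sub_pos hline hint hnv hε)
      (exists_mem_ball_inner_sub_pos hline hint (neg_ne_zero.2 hnv) hε)))

end SimplePolygon

theorem stmt_4_general (Q : SimplePolygon)
    (q t : Pt)
    (hseg : segment ℝ q t ⊆ Q.body)
    (hnot : ¬ openSegment ℝ q t ⊆ interior Q.body)
    (hmeet : (openSegment ℝ q t ∩ interior Q.body).Nonempty) :
    ∃ i : Fin Q.n, Q.IsReflex i ∧ Q.v i ∈ openSegment ℝ q t := by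
  obtain ⟨s, hs, hx, hint⟩ := exists_lineMap_notMem_frequently_mem isOpen_interior hnot hmeet
  have hxseg : lineMap q t s ∈ openSegment ℝ q t :=
    openSegment_eq_image_lineMap ℝ q t ▸ mem_image_of_mem _ hs
  have hline := eventually_lineMap_add_smul_mem hseg hs
  by_cases hvert : ∃ i, Q.v i = lineMap q t s
  · obtain ⟨i, hi⟩ := hvert
    refine ⟨i, fun ⟨ε, hε, hconv⟩ => ?_, hi ▸ hxseg⟩
    rw [hi] at hconv
    exact not_convex_inter_ball hx hline hint hε hconv
  · exact (hx (Q.mem_interior_body_of_forall_vertex_ne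
      (hseg (openSegment_subset_segment ℝ q t hxseg)) (not_exists.1 hvert) hline hint)).elim

/-- In a polygon in general position, if the segment `[q,t]` lies in the
polygon, its open part is not contained in the interior but meets the interior, then
some reflex vertex lies on the open segment. -/
theorem stmt_4 (Q : SimplePolygon) (hcomp : IsCompact Q.body)
    (hgp : Q.GeneralPosition)
    (q t : Pt) (hq : q ∈ Q.body) (ht : t ∈ Q.body)
    (hseg : segment ℝ q t ⊆ Q.body)
    (hnot : ¬ openSegment ℝ q t ⊆ interior Q.body)
    (hmeet : (openSegment ℝ q t ∩ interior Q.body).Nonempty) :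
    ∃ i : Fin Q.n, Q.IsReflex i ∧ Q.v i ∈ openSegment ℝ q t :=
  stmt_4_general Q q t hseg hnot hmeet
end
end

section
/- Let d > 0 and let C ⊆ ℝ² be a convex set containing points a, b, c such that dist a b ≥ d and the distance from c to the affine span of {a, b} is at least d. Then the Lebesgue measure (volume) of C is at least d²/2. -/
open scoped RealInnerProductSpace symmDiff
open Metric Set MeasureTheory

noncomputable section

/-!
The convex set contains the triangle `abc`. The parallelogram spanned by `b - a` and `c - a` is
covered by this triangle and its point reflection through the parallelogram's centre, so the
triangle has at least half its area. That area is `|ω (b - a) (c - a)|` for the area form `ω`,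
which equals `‖b - a‖` times the distance from `c` to the line `ab`, hence is at least `d²`.
-/

open Module
open scoped Pointwise

lemma smul_add_smul_mem_convexHull_zero {E : Type*} [AddCommGroup E] [Module ℝ E]
    {s t : ℝ} (hs : 0 ≤ s) (ht : 0 ≤ t) (hst : s + t ≤ 1) (u w : E) :
    s • u + t • w ∈ convexHull ℝ {0, u, w} := by
  have := (convex_convexHull ℝ ({0, u, w} : Set E)).sum_mem (t := Finset.univ)
    (w := ![1 - s - t, s, t]) (z := ![0, u, w])
    (fun i _ => by fin_cases i <;> simp <;> linarith)
    (by simp [Fin.sum_univ_three]; ring)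
    (fun i _ => subset_convexHull ℝ _ (by fin_cases i <;> simp))
  simpa [Fin.sum_univ_three] using this

lemma parallelepiped_pair_subset_convexHull_union {E : Type*} [AddCommGroup E] [Module ℝ E]
    (u w : E) :
    parallelepiped ![u, w] ⊆
      convexHull ℝ {0, u, w} ∪ ((u + w) +ᵥ (-1 : ℝ) • convexHull ℝ {0, u, w}) := by
  intro x hx
  obtain ⟨t, ⟨ht0, ht1⟩, rfl⟩ := (mem_parallelepiped_iff _ _).1 hx
  have h0 := ht0 0; have h1 := ht0 1; have h0' := ht1 0; have h1' := ht1 1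
  simp only [Pi.zero_apply, Pi.one_apply] at h0 h1 h0' h1'
  simp only [Fin.sum_univ_two, Matrix.cons_val_zero, Matrix.cons_val_one]
  rcases le_total (t 0 + t 1) 1 with hle | hge
  · exact Or.inl (smul_add_smul_mem_convexHull_zero h0 h1 hle u w)
  · refine Or.inr (mem_vadd_set.2 ⟨_, smul_mem_smul_set
      (smul_add_smul_mem_convexHull_zero (s := 1 - t 0) (t := 1 - t 1)
        (by linarith) (by linarith) (by linarith) u w), ?_⟩)
    simp only [vadd_eq_add, sub_smul, one_smul, smul_add, smul_sub, neg_smul]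
    abel

lemma measure_parallelepiped_pair_le_two_mul_convexHull {E : Type*} [NormedAddCommGroup E]
    [NormedSpace ℝ E] [FiniteDimensional ℝ E] [MeasurableSpace E] [BorelSpace E]
    (μ : Measure E) [μ.IsAddHaarMeasure] (u w : E) :
    μ (parallelepiped ![u, w]) ≤ 2 * μ (convexHull ℝ {0, u, w}) :=
  calc μ (parallelepiped ![u, w])
      ≤ μ (convexHull ℝ {0, u, w}) +
          μ ((u + w) +ᵥ (-1 : ℝ) • convexHull ℝ {0, u, w}) :=
        (measure_mono (parallelepiped_pair_subset_convexHull_union u w)).trans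
          (measure_union_le _ _)
    _ = 2 * μ (convexHull ℝ {0, u, w}) := by
        rw [measure_vadd, Measure.addHaar_smul, two_mul]
        simp

section OrientedPlane

variable {E : Type*} [NormedAddCommGroup E] [InnerProductSpace ℝ E] [Fact (finrank ℝ E = 2)]

attribute [local instance] FiniteDimensional.of_fact_finrank_eq_two

lemma dist_mul_infDist_affineSpan_pair_le (o : Orientation ℝ E (Fin 2)) (a b c : E) :
    dist a b * infDist c (affineSpan ℝ {a, b}) ≤ |o.areaForm (b - a) (c - a)| := by
  set u := b - a
  set t := ⟪u, c - a⟫ / ‖u‖ ^ 2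
  have horth : ⟪u, c - a - t • u⟫ = 0 := by
    rcases eq_or_ne u 0 with hu | hu
    · simp [hu]
    rw [inner_sub_right, inner_smul_right, real_inner_self_eq_norm_sq,
      div_mul_cancel₀ _ (pow_ne_zero 2 (norm_ne_zero_iff.2 hu)), sub_self]
  have hinfDist : infDist c (affineSpan ℝ {a, b}) ≤ ‖c - a - t • u‖ := by
    refine (infDist_le_dist_of_mem (AffineMap.lineMap_mem_affineSpan_pair t a b)).trans_eq ?_
    rw [dist_eq_norm, AffineMap.lineMap_apply]
    congr 1
    simp only [u, vsub_eq_sub, vadd_eq_add]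
    abel
  calc dist a b * infDist c (affineSpan ℝ {a, b}) ≤ ‖u‖ * ‖c - a - t • u‖ := by
        rw [dist_comm, dist_eq_norm]
        exact mul_le_mul_of_nonneg_left hinfDist (norm_nonneg _)
    _ = |o.areaForm u (c - a - t • u)| := (o.abs_areaForm_of_orthogonal horth).symm
    _ = |o.areaForm u (c - a)| := by simp

variable [MeasurableSpace E] [BorelSpace E]

lemma volume_parallelepiped_pair_eq_abs_areaForm (o : Orientation ℝ E (Fin 2)) (u w : E) :
    volume (parallelepiped ![u, w]) = ENNReal.ofReal |o.areaForm u w| := by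
  let b := o.finOrthonormalBasis two_pos Fact.out
  rw [← b.addHaar_eq_volume, Measure.addHaar_parallelepiped, o.areaForm_to_volumeForm,
    o.volumeForm_robust b (o.finOrthonormalBasis_orientation _ _)]

lemma ofReal_dist_mul_infDist_div_two_le_volume_convexHull (a b c : E) :
    ENNReal.ofReal (dist a b * infDist c (affineSpan ℝ {a, b}) / 2) ≤
      volume (convexHull ℝ {a, b, c}) := by
  let o : Orientation ℝ E (Fin 2) := (finBasisOfFinrankEq ℝ E Fact.out).orientation
  have htranslate : convexHull ℝ {a, b, c} = a +ᵥ convexHull ℝ {0, b - a, c - a} := by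
    simp [← convexHull_vadd, vadd_set_insert]
  calc ENNReal.ofReal (dist a b * infDist c (affineSpan ℝ {a, b}) / 2)
      ≤ ENNReal.ofReal |o.areaForm (b - a) (c - a)| / 2 := by
        rw [ENNReal.ofReal_div_of_pos two_pos, ENNReal.ofReal_ofNat]
        gcongr
        exact dist_mul_infDist_affineSpan_pair_le o a b c
    _ = volume (parallelepiped ![b - a, c - a]) / 2 := by
        rw [volume_parallelepiped_pair_eq_abs_areaForm o]
    _ ≤ volume (convexHull ℝ {0, b - a, c - a}) :=
        ENNReal.div_le_of_le_mul' (measure_parallelepiped_pair_le_two_mul_convexHull volume _ _)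
    _ = volume (convexHull ℝ {a, b, c}) := by rw [htranslate, measure_vadd]

end OrientedPlane

/-- A convex set in the plane containing two points at distance at least `d`
and a third point at distance at least `d` from the line through them has area at least
`d²/2`. -/
theorem stmt_9 (d : ℝ) (hd : 0 < d) (C : Set Pt) (hC : Convex ℝ C)
    (a b c : Pt) (ha : a ∈ C) (hb : b ∈ C) (hc : c ∈ C)
    (hab : d ≤ dist a b)
    (hdist : d ≤ Metric.infDist c ((affineSpan ℝ ({a, b} : Set Pt) : Set Pt))) :
    ENNReal.ofReal (d ^ 2 / 2) ≤ volume C := by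
  have : Fact (finrank ℝ Pt = 2) := ⟨finrank_euclideanSpace_fin⟩
  have hsq : d ^ 2 ≤ dist a b * infDist c (affineSpan ℝ {a, b}) := by
    rw [sq]
    exact mul_le_mul hab hdist hd.le dist_nonneg
  calc ENNReal.ofReal (d ^ 2 / 2)
      ≤ ENNReal.ofReal (dist a b * infDist c (affineSpan ℝ {a, b}) / 2) := by gcongr
    _ ≤ volume (convexHull ℝ {a, b, c}) :=
        ofReal_dist_mul_infDist_div_two_le_volume_convexHull a b c
    _ ≤ volume C := measure_mono (convexHull_min (by simp [insert_subset_iff, ha, hb, hc]) hC)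
end
end

section
/- Let P be a simple polygon in ℝ² with vertex map v : Fin n → ℝ². Then the metric diameter of P satisfies Metric.diam P ≤ (1/2) · ∑ i, dist (v i) (v (i+1 mod n)), i.e., the diameter of the polygon body is at most half its perimeter. -/
open scoped RealInnerProductSpace symmDiff
open Metric Set MeasureTheory

noncomputable section

/-!
The body lies in the convex hull of the vertices: a point outside the hull is strictly separated
from it by an open half-plane, which is connected, unbounded and disjoint from the boundary, so
the point lies in an unbounded component of the complement of the boundary. Taking the convex
hull does not increase the diameter, and two vertices cut the closed boundary path into two
paths joining them, each at least as long as their distance.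
-/

open Bornology

theorem two_mul_dist_le_sum_dist_nxt {α : Type*} [PseudoMetricSpace α] {n : ℕ}
    (f : Fin n → α) (i j : Fin n) :
    2 * dist (f i) (f j) ≤ ∑ k, dist (f k) (f (nxt k)) := by
  wlog hij : i ≤ j generalizing i j
  · rw [dist_comm]
    exact this j i (le_of_not_ge hij)
  have hij' : i.1 ≤ j.1 := hij
  have hj : j.1 ≤ n := j.isLt.le
  have hn : 0 < n := i.pos
  set g : ℕ → α := fun m => f ⟨m % n, Nat.mod_lt _ hn⟩
  have hg : ∀ k : Fin n, g k = f k := fun k => congrArg f (Fin.ext (Nat.mod_eq_of_lt k.isLt))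
  have hg_succ : ∀ m, g (m + 1) = f (nxt ⟨m % n, Nat.mod_lt _ hn⟩) := fun m =>
    congrArg f (Fin.ext (Nat.mod_add_mod m n 1).symm)
  have hsum : ∑ m ∈ Finset.range n, dist (g m) (g (m + 1)) = ∑ k, dist (f k) (f (nxt k)) := by
    rw [← Fin.sum_univ_eq_sum_range]
    refine Finset.sum_congr rfl fun k _ => ?_
    rw [hg_succ, hg]
    simp only [Nat.mod_eq_of_lt k.isLt]
  have h_fwd : dist (f i) (f j) ≤ ∑ m ∈ Finset.Ico i.1 j.1, dist (g m) (g (m + 1)) := by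
    rw [← hg, ← hg]
    exact dist_le_Ico_sum_dist g hij'
  have h_bwd : dist (f j) (f i) ≤ ∑ m ∈ Finset.Ico j.1 n, dist (g m) (g (m + 1)) +
      ∑ m ∈ Finset.Ico 0 i.1, dist (g m) (g (m + 1)) := by
    have hwrap : g n = g 0 := by simp [g]
    calc dist (f j) (f i) ≤ dist (g j) (g n) + dist (g 0) (g i) := by
          rw [hg, hg, ← hwrap]; exact dist_triangle _ _ _
      _ ≤ _ := add_le_add (dist_le_Ico_sum_dist g hj) (dist_le_Ico_sum_dist g (Nat.zero_le _))
  calc 2 * dist (f i) (f j) = dist (f i) (f j) + dist (f j) (f i) := by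
        rw [dist_comm (f j)]; ring
    _ ≤ _ := add_le_add h_fwd h_bwd
    _ = ∑ m ∈ Finset.range n, dist (g m) (g (m + 1)) := by
        rw [Finset.range_eq_Ico, ← Finset.sum_Ico_consecutive _ (Nat.zero_le i.1) (hij'.trans hj),
          ← Finset.sum_Ico_consecutive _ hij' hj]
        ring
    _ = _ := hsum

theorem not_isBounded_connectedComponentIn_compl_of_convex {E : Type*} [NormedAddCommGroup E]
    [NormedSpace ℝ E] {K : Set E} (hKconv : Convex ℝ K) (hKclosed : IsClosed K)
    (hKne : K.Nonempty) {z : E} (hz : z ∉ K) :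
    ¬ IsBounded (connectedComponentIn Kᶜ z) := by
  intro hbdd
  obtain ⟨f, u, hfK, hfz⟩ := geometric_hahn_banach_closed_point hKconv hKclosed hz
  obtain ⟨a, ha⟩ := hKne
  set H : Set E := {y | u < f y}
  have hH : H ⊆ connectedComponentIn Kᶜ z :=
    (convex_halfSpace_gt f.isLinear u).isPreconnected.subset_connectedComponentIn hfz
      fun y hy hyK => (hfK y hyK).not_gt hy
  have hfza : 0 < f (z - a) := by rw [map_sub]; linarith [hfK a ha]
  have hsurj : Ioi u ⊆ f '' H := fun r hr =>
    ⟨z + ((r - f z) / f (z - a)) • (z - a), by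
      simp only [H, mem_ofPred_eq, map_add, map_smul, smul_eq_mul, div_mul_cancel₀ _ hfza.ne']
      simpa using hr, by
      simp only [map_add, map_smul, smul_eq_mul, div_mul_cancel₀ _ hfza.ne']; ring⟩
  exact not_bddAbove_Ioi u ((f.lipschitz.isBounded_image (hbdd.subset hH)).bddAbove.mono hsurj)

namespace SimplePolygon

variable (Q : SimplePolygon)

theorem bdry_subset_convexHull : Q.bdry ⊆ convexHull ℝ (range Q.v) :=
  iUnion_subset fun i => (convex_convexHull ℝ _).segment_subset
    (subset_convexHull ℝ _ (mem_range_self i)) (subset_convexHull ℝ _ (mem_range_self (nxt i)))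

theorem body_subset_convexHull : Q.body ⊆ convexHull ℝ (range Q.v) := by
  rintro z (hz | ⟨-, hbdd⟩)
  · exact Q.bdry_subset_convexHull hz
  by_contra hzK
  have hne : (range Q.v).Nonempty := range_nonempty_iff_nonempty.2 ⟨⟨0, by linarith [Q.hn]⟩⟩
  exact not_isBounded_connectedComponentIn_compl_of_convex (convex_convexHull ℝ _)
    ((finite_range Q.v).isClosed_convexHull ℝ) hne.convexHull hzK
    (hbdd.subset (connectedComponentIn_mono _ (compl_subset_compl.2 Q.bdry_subset_convexHull)))

end SimplePolygon

theorem stmt_13_general (Q : SimplePolygon) :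
    Metric.diam Q.body ≤ (1 / 2) * ∑ i, dist (Q.v i) (Q.v (nxt i)) :=
  calc Metric.diam Q.body ≤ Metric.diam (convexHull ℝ (range Q.v)) :=
        diam_mono Q.body_subset_convexHull (((finite_range Q.v).isCompact_convexHull ℝ).isBounded)
    _ = Metric.diam (range Q.v) := convexHull_diam _
    _ ≤ _ := diam_le_of_forall_dist_le (by positivity) <| by
        rintro _ ⟨i, rfl⟩ _ ⟨j, rfl⟩
        linarith [two_mul_dist_le_sum_dist_nxt Q.v i j]

/-- The diameter of the polygon body is at most half its perimeter. -/
theorem stmt_13 (Q : SimplePolygon) (hcomp : IsCompact Q.body) :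
    Metric.diam Q.body ≤ (1 / 2) * ∑ i, dist (Q.v i) (Q.v (nxt i)) :=
  stmt_13_general Q
end
end
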